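/- Let (G, ℓ) be a finite connected graph with positive edge resistances, let e = uv be an edge of G, and let (H, ℓ') be obtained from G by subdividing e into two edges e₁ = ux and e₂ = xv (x a new vertex of degree 2) with positive lengths satisfying ℓ_{e₁} + ℓ_{e₂} = ℓ_e, all other edges unchanged. Then the Foster coefficients satisfy F^G(e) = F^H(e₁) + F^H(e₂). -/

import Mathlib

open Finset

section RicciFoster

variable {V E : Type} [Fintype V] [Fintype E] [DecidableEq V] [DecidableEq E]

/-- One adjacency step: `a` and `b` are joined by an edge in `T`,
or identified by the relation `R`. -/
def stepRel (ends : E → V × V) (T : Finset E) (R : V → V → Prop) (a b : V) : Prop :=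
  (∃ e ∈ T, ends e = (a, b) ∨ ends e = (b, a)) ∨ R a b ∨ R b a

/-- The edge set `T`, together with the identifications `R`, connects all vertices. -/
def Connects (ends : E → V × V) (T : Finset E) (R : V → V → Prop) : Prop :=
  ∀ a b : V, Relation.ReflTransGen (stepRel ends T R) a b

/-- The (multi)graph with vertex set `V`, edge set `E` and endpoint map `ends` is connected. -/
def ConnectedG (ends : E → V × V) : Prop :=
  Connects ends Finset.univ (fun _ _ => False)

open scoped Classical in
/-- Weighted spanning-tree polynomial `τ(G; ℓ) = Σ_{spanning trees T} Π_{e ∉ T} ℓ_e`.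
A spanning tree is an edge set with `|V| - 1` edges connecting all vertices. -/
noncomputable def treePoly (ends : E → V × V) (ℓ : E → ℝ) : ℝ :=
  ∑ T ∈ Finset.univ.filter
      (fun T : Finset E => T.card + 1 = Fintype.card V ∧
        Connects ends T (fun _ _ => False)),
    ∏ e ∈ Tᶜ, ℓ e

open scoped Classical in
/-- Weighted spanning-tree polynomial `τ(G/xy; ℓ)` of the contraction `G/xy`:
spanning trees of `G/xy` are edge sets of `G` with `|V| - 2` edges which connect
all vertices once `x` and `y` are identified. -/
noncomputable def treePolyContract (ends : E → V × V) (x y : V) (ℓ : E → ℝ) : ℝ :=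
  ∑ T ∈ Finset.univ.filter
      (fun T : Finset E => T.card + 2 = Fintype.card V ∧
        Connects ends T (fun a b => a = x ∧ b = y)),
    ∏ e ∈ Tᶜ, ℓ e

/-- Effective resistance `ω_xy = τ(G/xy; ℓ) / τ(G; ℓ)`. -/
noncomputable def effRes (ends : E → V × V) (x y : V) (ℓ : E → ℝ) : ℝ :=
  treePolyContract ends x y ℓ / treePoly ends ℓ

/-- Degree of a vertex (a loop counts twice). -/
def degreeG (ends : E → V × V) (v : V) : ℕ :=
  ∑ e : E, ((if (ends e).1 = v then 1 else 0) + (if (ends e).2 = v then 1 else 0))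

/-- Ricci–Foster curvature `K_e = 1/deg u + 1/deg v − ω_uv/ℓ_e` of the edge `e = uv`. -/
noncomputable def curv (ends : E → V × V) (ℓ : E → ℝ) (e : E) : ℝ :=
  (degreeG ends (ends e).1 : ℝ)⁻¹ + (degreeG ends (ends e).2 : ℝ)⁻¹
    - effRes ends (ends e).1 (ends e).2 ℓ / ℓ e

/-- `ℓ : ℝ → E → ℝ` is a solution of the Ricci–Foster flow on `[0, T)`:
the resistances stay positive and `dℓ_e/dt = −K_e(ℓ(t))` for every edge `e`. -/
def IsRicciFlow (ends : E → V × V) (T : ℝ) (ℓ : ℝ → E → ℝ) : Prop :=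
  ∀ t ∈ Set.Ico (0 : ℝ) T,
    (∀ e, 0 < ℓ t e) ∧
    (∀ e, HasDerivWithinAt (fun s => ℓ s e) (-(curv ends (ℓ t) e)) (Set.Ico (0 : ℝ) T) t)

end RicciFoster

section Subdivision

variable {V E : Type} [Fintype V] [Fintype E] [DecidableEq V] [DecidableEq E]

open scoped Classical in
/-- Foster coefficient `F(e) = ℓ_e / (ℓ_e + ω_e(G∖e))`, where `ω_e(G∖e)` is the effective
resistance between the endpoints of `e` in the edge-deleted graph `G∖e`;
`F(e) = 0` when `e` is a bridge, i.e. when `G∖e` is disconnected. -/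
noncomputable def foster (ends : E → V × V) (ℓ : E → ℝ) (e0 : E) : ℝ :=
  if ConnectedG (fun f : {f : E // f ≠ e0} => ends f.1) then
    ℓ e0 / (ℓ e0 +
      effRes (fun f : {f : E // f ≠ e0} => ends f.1) (ends e0).1 (ends e0).2 (fun f => ℓ f.1))
  else 0

/-- The graph `H` obtained from `G` by subdividing the edge `e0 = uv` into two edges
`e₁ = u–x` and `e₂ = x–v` through a new vertex `x` (here `x = none`):
`e₁` is `Sum.inl e0` and `e₂` is `Sum.inr ()`. -/
def subdivEnds (ends : E → V × V) (e0 : E) : E ⊕ Unit → Option V × Option V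
  | Sum.inl f => if f = e0 then (some (ends e0).1, none) else (some (ends f).1, some (ends f).2)
  | Sum.inr _ => (none, some (ends e0).2)

/-- Resistances on the subdivided graph: `e₁` has length `a`, `e₂` has length `b`, and
all other edges keep their length. -/
noncomputable def subdivLen (ℓ : E → ℝ) (e0 : E) (a b : ℝ) : E ⊕ Unit → ℝ
  | Sum.inl f => if f = e0 then a else ℓ f
  | Sum.inr _ => b

end Subdivision

set_option linter.unusedSectionVars false
set_option linter.unusedVariables false

section Aux
variable {V E : Type} [Fintype V] [Fintype E] [DecidableEq V] [DecidableEq E]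

lemma stepRel_symm (ends : E → V × V) (T : Finset E) (R : V → V → Prop) :
    Symmetric (stepRel ends T R) := by
  intro a b h
  rcases h with ⟨e, he, h⟩ | h | h
  · exact Or.inl ⟨e, he, h.symm⟩
  · exact Or.inr (Or.inr h)
  · exact Or.inr (Or.inl h)

lemma relSymm (ends : E → V × V) (T : Finset E) (R : V → V → Prop) {a b : V}
    (h : Relation.ReflTransGen (stepRel ends T R) a b) :
    Relation.ReflTransGen (stepRel ends T R) b a :=
  (@Relation.ReflTransGen.symmetric _ (stepRel ends T R)
    ⟨fun x y hxy => stepRel_symm ends T R hxy⟩).symm _ _ h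

lemma rel_mono {ends : E → V × V} {T T' : Finset E} {R : V → V → Prop} (hTT : T ⊆ T')
    {a b : V} (h : Relation.ReflTransGen (stepRel ends T R) a b) :
    Relation.ReflTransGen (stepRel ends T' R) a b := by
  refine Relation.ReflTransGen.mono ?_ _ _ h
  intro x y hxy
  rcases hxy with ⟨e, he, h⟩ | h
  · exact Or.inl ⟨e, hTT he, h⟩
  · exact Or.inr h

lemma crossing {ends : E → V × V} (T : Finset E) {W : Finset V} {x y : V}
    (hx : x ∈ W) (hy : y ∉ W)
    (h : Relation.ReflTransGen (stepRel ends T (fun _ _ => False)) x y) :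
    ∃ e ∈ T, ∃ p q, (ends e = (p, q) ∨ ends e = (q, p)) ∧ p ∈ W ∧ q ∉ W := by
  revert hy
  induction h with
  | refl => exact fun hy => absurd hx hy
  | @tail b c hxb hbc ih =>
    intro hc
    by_cases hb : b ∈ W
    · rcases hbc with ⟨e, he, h⟩ | h | h
      · exact ⟨e, he, b, c, h, hb, hc⟩
      · exact h.elim
      · exact h.elim
    · exact ih hb

end Aux
section Aux2
variable {V E : Type} [Fintype V] [Fintype E] [DecidableEq V] [DecidableEq E]

lemma exists_spanning_tree {ends : E → V × V} [Nonempty V]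
    (hconn : ConnectedG ends) :
    ∃ T : Finset E, T.card + 1 = Fintype.card V ∧
      Connects ends T (fun _ _ => False) := by
  classical
  obtain ⟨x0⟩ := ‹Nonempty V›
  have key : ∀ k : ℕ, k + 1 ≤ Fintype.card V →
      ∃ (S : Finset E) (W : Finset V), S.card = k ∧ W.card = k + 1 ∧
        (∀ e ∈ S, (ends e).1 ∈ W ∧ (ends e).2 ∈ W) ∧
        (∀ x ∈ W, ∀ y ∈ W,
          Relation.ReflTransGen (stepRel ends S (fun _ _ => False)) x y) := by
    intro k
    induction k with
    | zero =>
      intro _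
      refine ⟨∅, {x0}, rfl, rfl, fun e he => absurd he (Finset.notMem_empty e), ?_⟩
      intro x hx y hy
      rw [Finset.mem_singleton] at hx hy
      rw [hx, hy]
    | succ k ih =>
      intro hk
      obtain ⟨S, W, hScard, hWcard, hSW, hWconn⟩ := ih (by omega)
      have hWne : W.Nonempty := by
        rw [← Finset.card_pos, hWcard]; omega
      obtain ⟨p0, hp0⟩ := hWne
      have hWlt : W.card < Fintype.card V := by omega
      have : ∃ y, y ∉ W := by
        by_contra h
        push_neg at h
        have : W = Finset.univ := Finset.eq_univ_of_forall h
        rw [this, Finset.card_univ] at hWlt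
        omega
      obtain ⟨y0, hy0⟩ := this
      obtain ⟨e, _, p, q, hepq, hpW, hqW⟩ :=
        crossing Finset.univ hp0 hy0 (hconn p0 y0)
      have heS : e ∉ S := by
        intro heS
        rcases hepq with h | h <;> rcases hSW e heS with ⟨h1, h2⟩ <;>
          rw [h] at h1 h2 <;> exact hqW (by assumption)
      -- the step via e inside insert e S
      have hstep : stepRel ends (insert e S) (fun _ _ => False) p q :=
        Or.inl ⟨e, Finset.mem_insert_self e S, by tauto⟩
      refine ⟨insert e S, insert q W, ?_, ?_, ?_, ?_⟩
      · rw [Finset.card_insert_of_notMem heS, hScard]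
      · rw [Finset.card_insert_of_notMem hqW, hWcard]
      · intro f hf
        rcases Finset.mem_insert.1 hf with rfl | hfS
        · rcases hepq with h | h <;> rw [h]
          · exact ⟨Finset.mem_insert_of_mem hpW, Finset.mem_insert_self q W⟩
          · exact ⟨Finset.mem_insert_self q W, Finset.mem_insert_of_mem hpW⟩
        · obtain ⟨h1, h2⟩ := hSW f hfS
          exact ⟨Finset.mem_insert_of_mem h1, Finset.mem_insert_of_mem h2⟩
      · intro x hx y hy
        have reach : ∀ z ∈ insert q W,
            Relation.ReflTransGen (stepRel ends (insert e S) (fun _ _ => False)) p z := by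
          intro z hz
          rcases Finset.mem_insert.1 hz with rfl | hzW
          · exact Relation.ReflTransGen.single hstep
          · exact rel_mono (Finset.subset_insert e S) (hWconn p hpW z hzW)
        exact (relSymm _ _ _ (reach x hx)).trans (reach y hy)
  have hcard : 1 ≤ Fintype.card V := Fintype.card_pos
  obtain ⟨S, W, hScard, hWcard, _, hWconn⟩ :=
    key (Fintype.card V - 1) (by omega)
  have hWuniv : W = Finset.univ := by
    apply Finset.eq_univ_of_card
    rw [hWcard]; omega
  refine ⟨S, by omega, fun x y => ?_⟩
  exact hWconn x (hWuniv ▸ Finset.mem_univ x) y (hWuniv ▸ Finset.mem_univ y)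

end Aux2
section Aux3
variable {V E : Type} [Fintype V] [Fintype E] [DecidableEq V] [DecidableEq E]

lemma treePoly_nonneg (ends : E → V × V) {ℓ : E → ℝ} (hpos : ∀ f, 0 < ℓ f) :
    0 ≤ treePoly ends ℓ := by
  classical
  refine Finset.sum_nonneg fun T _ => le_of_lt (Finset.prod_pos fun e _ => hpos e)

lemma treePolyContract_nonneg (ends : E → V × V) (x y : V) {ℓ : E → ℝ}
    (hpos : ∀ f, 0 < ℓ f) : 0 ≤ treePolyContract ends x y ℓ := by
  classical
  refine Finset.sum_nonneg fun T _ => le_of_lt (Finset.prod_pos fun e _ => hpos e)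

lemma treePoly_pos {ends : E → V × V} [Nonempty V] (hconn : ConnectedG ends)
    {ℓ : E → ℝ} (hpos : ∀ f, 0 < ℓ f) : 0 < treePoly ends ℓ := by
  classical
  obtain ⟨T, hT1, hT2⟩ := exists_spanning_tree hconn
  unfold treePoly
  refine Finset.sum_pos' (fun S _ => le_of_lt (Finset.prod_pos fun e _ => hpos e)) ?_
  refine ⟨T, ?_, Finset.prod_pos fun e _ => hpos e⟩
  · rw [Finset.mem_filter]
    exact ⟨Finset.mem_univ T, hT1, hT2⟩

lemma treePolyContract_comm (ends : E → V × V) (x y : V) (ℓ : E → ℝ) :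
    treePolyContract ends x y ℓ = treePolyContract ends y x ℓ := by
  classical
  unfold treePolyContract
  apply Finset.sum_congr _ (fun _ _ => rfl)
  apply Finset.filter_congr
  intro T _
  have hrel : stepRel ends T (fun a b => a = x ∧ b = y)
      = stepRel ends T (fun a b => a = y ∧ b = x) := by
    funext a b
    apply propext
    unfold stepRel
    constructor <;> (rintro (h | h | h); exacts [Or.inl h, Or.inr (Or.inr ⟨h.2, h.1⟩), Or.inr (Or.inl ⟨h.2, h.1⟩)])
  constructor <;> (rintro ⟨h1, h2⟩; refine ⟨h1, ?_⟩) <;> (unfold Connects at h2 ⊢)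
  · rw [← hrel]; exact h2
  · rw [hrel]; exact h2
end Aux3
section Pendant
open scoped Classical

variable {V E' F : Type} [Fintype V] [Fintype E'] [Fintype F]
  [DecidableEq V] [DecidableEq E'] [DecidableEq F]
variable (endsF : F → Option V × Option V) (L : F → ℝ) (eh : F) (w : V)
  (ends' : E' → V × V) (ℓ' : E' → ℝ)

lemma connects_down (σ : E' ≃ {f : F // f ≠ eh})
    (hpend : endsF eh = (some w, none) ∨ endsF eh = (none, some w))
    (hends : ∀ g, endsF (σ g).1 = (some (ends' g).1, some (ends' g).2))
    (T : Finset F) (R : Option V → Option V → Prop) (R' : V → V → Prop)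
    (T' : Finset E') (hT' : ∀ g, g ∈ T' ↔ (σ g).1 ∈ T)
    (proj : Option V → V) (hproj : ∀ x : V, proj (some x) = x)
    (heh : eh ∈ T → Relation.ReflTransGen (stepRel ends' T' R') (proj none) w)
    (hR : ∀ a b, R a b → Relation.ReflTransGen (stepRel ends' T' R') (proj a) (proj b))
    (hconn : Connects endsF T R) : Connects ends' T' R' := by
  have key : ∀ x y, Relation.ReflTransGen (stepRel endsF T R) x y →
      Relation.ReflTransGen (stepRel ends' T' R') (proj x) (proj y) := by
    intro x y h
    induction h with
    | refl => exact .refl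
    | tail _ hstep ih =>
      refine ih.trans ?_
      rcases hstep with ⟨e, heT, hor⟩ | hR1 | hR1
      · by_cases hee : e = eh
        · subst hee
          rcases hpend with hp | hp <;> rw [hp] at hor <;>
              rcases hor with h | h <;> rw [Prod.ext_iff] at h <;>
              obtain ⟨h1, h2⟩ := h <;> subst h1 <;> subst h2 <;>
              rw [hproj]
          · exact relSymm _ _ _ (heh heT)
          · exact heh heT
          · exact heh heT
          · exact relSymm _ _ _ (heh heT)
        · have hg1 : (σ (σ.symm ⟨e, hee⟩)).1 = e := by rw [Equiv.apply_symm_apply]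
          have hgT' : σ.symm ⟨e, hee⟩ ∈ T' := (hT' _).2 (by rw [hg1]; exact heT)
          have he2 : endsF e = (some (ends' (σ.symm ⟨e, hee⟩)).1,
              some (ends' (σ.symm ⟨e, hee⟩)).2) := by
            have h := hends (σ.symm ⟨e, hee⟩); rwa [hg1] at h
          rcases hor with h | h <;> rw [he2] at h <;> rw [Prod.ext_iff] at h <;>
              obtain ⟨h1, h2⟩ := h <;> subst h1 <;> subst h2 <;> rw [hproj, hproj]
          · exact Relation.ReflTransGen.single (Or.inl ⟨_, hgT', Or.inl rfl⟩)
          · exact Relation.ReflTransGen.single (Or.inl ⟨_, hgT', Or.inr rfl⟩)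
      · exact hR _ _ hR1
      · exact relSymm _ _ _ (hR _ _ hR1)
  intro a b
  have := key (some a) (some b) (hconn (some a) (some b))
  rwa [hproj, hproj] at this

lemma connects_up (σ : E' ≃ {f : F // f ≠ eh})
    (hends : ∀ g, endsF (σ g).1 = (some (ends' g).1, some (ends' g).2))
    (T : Finset F) (R : Option V → Option V → Prop) (R' : V → V → Prop)
    (T' : Finset E') (hT' : ∀ g ∈ T', (σ g).1 ∈ T)
    (hnone : ∃ z0 : V, Relation.ReflTransGen (stepRel endsF T R) none (some z0))
    (hR' : ∀ a b, R' a b → Relation.ReflTransGen (stepRel endsF T R) (some a) (some b))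
    (hconn : Connects ends' T' R') : Connects endsF T R := by
  have lift : ∀ a b : V, Relation.ReflTransGen (stepRel ends' T' R') a b →
      Relation.ReflTransGen (stepRel endsF T R) (some a) (some b) := by
    intro a b h
    induction h with
    | refl => exact .refl
    | tail _ hstep ih =>
      refine ih.trans ?_
      rcases hstep with ⟨g, hgT, hor⟩ | h | h
      · have he := hends g
        refine Relation.ReflTransGen.single (Or.inl ⟨(σ g).1, hT' g hgT, ?_⟩)
        rcases hor with h | h <;> rw [h] at he
        · exact Or.inl he
        · exact Or.inr he
      · exact hR' _ _ h
      · exact relSymm _ _ _ (hR' _ _ h)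
  obtain ⟨z0, hz0⟩ := hnone
  intro x y
  match x, y with
  | none, none => exact .refl
  | none, some b => exact hz0.trans (lift z0 b (hconn z0 b))
  | some a, none => exact (lift a z0 (hconn a z0)).trans (relSymm _ _ _ hz0)
  | some a, some b => exact lift a b (hconn a b)

/-- transported tree: edges of `E'` whose image lies in `T`. -/
noncomputable def PhiT (σ : E' ≃ {f : F // f ≠ eh}) (T : Finset F) : Finset E' :=
  Finset.univ.filter (fun g => ((σ g) : F) ∈ T)

lemma mem_PhiT (σ : E' ≃ {f : F // f ≠ eh}) (T : Finset F) (g : E') :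
    g ∈ PhiT eh σ T ↔ ((σ g) : F) ∈ T := by
  simp [PhiT]

lemma iota_inj (σ : E' ≃ {f : F // f ≠ eh}) :
    Function.Injective (fun g : E' => ((σ g) : F)) :=
  fun g g' h => σ.injective (Subtype.ext h)

lemma card_PhiT_mem (σ : E' ≃ {f : F // f ≠ eh}) (T : Finset F) (hT : eh ∈ T) :
    (PhiT eh σ T).card + 1 = T.card := by
  have h1 : (PhiT eh σ T).card = (T.erase eh).card := by
    apply Finset.card_bij (fun g _ => ((σ g) : F))
    · intro g hg
      exact Finset.mem_erase.2 ⟨(σ g).2, (mem_PhiT eh σ T g).1 hg⟩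
    · intro g _ g' _ h
      exact iota_inj eh σ h
    · intro f hf
      obtain ⟨hne, hfT⟩ := Finset.mem_erase.1 hf
      refine ⟨σ.symm ⟨f, hne⟩, ?_, by rw [Equiv.apply_symm_apply]⟩
      rw [mem_PhiT, Equiv.apply_symm_apply]
      exact hfT
  have h2 : 0 < T.card := Finset.card_pos.2 ⟨eh, hT⟩
  rw [h1, Finset.card_erase_of_mem hT]
  omega

lemma card_PhiT_not_mem (σ : E' ≃ {f : F // f ≠ eh}) (T : Finset F) (hT : eh ∉ T) :
    (PhiT eh σ T).card = T.card := by
  apply Finset.card_bij (fun g _ => ((σ g) : F))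
  · intro g hg
    exact (mem_PhiT eh σ T g).1 hg
  · intro g _ g' _ h
    exact iota_inj eh σ h
  · intro f hf
    have hne : f ≠ eh := fun h => hT (h ▸ hf)
    refine ⟨σ.symm ⟨f, hne⟩, ?_, by rw [Equiv.apply_symm_apply]⟩
    rw [mem_PhiT, Equiv.apply_symm_apply]
    exact hf

lemma prod_compl_mem (σ : E' ≃ {f : F // f ≠ eh}) (hL : ∀ g, L ((σ g) : F) = ℓ' g)
    (T : Finset F) (hT : eh ∈ T) :
    ∏ f ∈ Tᶜ, L f = ∏ g ∈ (PhiT eh σ T)ᶜ, ℓ' g := by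
  symm
  apply Finset.prod_bij (fun g (_ : g ∈ (PhiT eh σ T)ᶜ) => ((σ g) : F))
  · intro g hg
    rw [Finset.mem_compl] at hg ⊢
    rw [mem_PhiT] at hg
    exact hg
  · intro g _ g' _ h
    exact iota_inj eh σ h
  · intro f hf
    rw [Finset.mem_compl] at hf
    have hne : f ≠ eh := fun h => hf (h ▸ hT)
    refine ⟨σ.symm ⟨f, hne⟩, ?_, by rw [Equiv.apply_symm_apply]⟩
    rw [Finset.mem_compl, mem_PhiT, Equiv.apply_symm_apply]
    exact hf
  · intro g _
    exact (hL g).symm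

lemma PhiT_insert_eh (σ : E' ≃ {f : F // f ≠ eh}) (T : Finset F) :
    PhiT eh σ (insert eh T) = PhiT eh σ T := by
  ext g
  rw [mem_PhiT, mem_PhiT, Finset.mem_insert]
  have := (σ g).2
  tauto

lemma prod_compl_not_mem (σ : E' ≃ {f : F // f ≠ eh}) (hL : ∀ g, L ((σ g) : F) = ℓ' g)
    (T : Finset F) (hT : eh ∉ T) :
    ∏ f ∈ Tᶜ, L f = L eh * ∏ g ∈ (PhiT eh σ T)ᶜ, ℓ' g := by
  have heh : eh ∈ Tᶜ := Finset.mem_compl.2 hT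
  rw [← Finset.mul_prod_erase _ _ heh, ← Finset.compl_insert,
    prod_compl_mem L eh ℓ' σ hL (insert eh T) (Finset.mem_insert_self eh T),
    PhiT_insert_eh]

end Pendant
section Pendant2
open scoped Classical

variable {V E' F : Type} [Fintype V] [Fintype E'] [Fintype F]
  [DecidableEq V] [DecidableEq E'] [DecidableEq F]
variable (endsF : F → Option V × Option V) (L : F → ℝ) (eh : F) (w : V)
  (ends' : E' → V × V) (ℓ' : E' → ℝ)

lemma pendant_mem_eh [Nonempty V] (σ : E' ≃ {f : F // f ≠ eh})
    (hends : ∀ g, endsF ((σ g) : F) = (some (ends' g).1, some (ends' g).2))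
    (T : Finset F) (hconn : Connects endsF T (fun _ _ => False)) : eh ∈ T := by
  obtain ⟨x0⟩ := ‹Nonempty V›
  have h := hconn none (some x0)
  rcases Relation.ReflTransGen.cases_head h with heq | ⟨c, hstep, -⟩
  · exact absurd heq (by simp)
  · rcases hstep with ⟨e, heT, hor⟩ | h | h
    · by_cases hee : e = eh
      · exact hee ▸ heT
      · exfalso
        have hg1 : ((σ (σ.symm ⟨e, hee⟩)) : F) = e := by rw [Equiv.apply_symm_apply]
        have he2 := hends (σ.symm ⟨e, hee⟩)
        rw [hg1] at he2
        rw [he2] at hor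
        rcases hor with h | h <;> rw [Prod.ext_iff] at h <;> simp at h
    · exact h.elim
    · exact h.elim

lemma pendant_connected [Nonempty V] (σ : E' ≃ {f : F // f ≠ eh})
    (hpend : endsF eh = (some w, none) ∨ endsF eh = (none, some w))
    (hends : ∀ g, endsF ((σ g) : F) = (some (ends' g).1, some (ends' g).2)) :
    ConnectedG endsF ↔ ConnectedG ends' := by
  constructor
  · intro h
    have := connects_down endsF eh w ends' σ hpend hends Finset.univ _
      (fun _ _ => False) Finset.univ (fun g => by simp)
      (fun o => o.getD w) (fun x => rfl) (fun _ => .refl)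
      (fun a b hab => hab.elim) h
    exact this
  · intro h
    refine connects_up endsF eh ends' σ hends Finset.univ _ _ Finset.univ
      (fun g _ => Finset.mem_univ _)
      ⟨w, Relation.ReflTransGen.single (Or.inl ⟨eh, Finset.mem_univ _, ?_⟩)⟩
      (fun a b hab => hab.elim) h
    rcases hpend with hp | hp
    · exact Or.inr hp
    · exact Or.inl hp

lemma pendant_treePoly [Nonempty V] (σ : E' ≃ {f : F // f ≠ eh})
    (hpend : endsF eh = (some w, none) ∨ endsF eh = (none, some w))
    (hends : ∀ g, endsF ((σ g) : F) = (some (ends' g).1, some (ends' g).2))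
    (hL : ∀ g, L ((σ g) : F) = ℓ' g) :
    treePoly endsF L = treePoly ends' ℓ' := by
  classical
  unfold treePoly
  refine Finset.sum_nbij' (fun T => PhiT eh σ T)
    (fun T' => insert eh (T'.image (fun g => ((σ g) : F)))) ?_ ?_ ?_ ?_ ?_
  · intro T hT
    rw [Finset.mem_filter] at hT ⊢
    obtain ⟨-, hcard, hconn⟩ := hT
    have hehT := pendant_mem_eh endsF eh ends' σ hends T hconn
    refine ⟨Finset.mem_univ _, ?_, ?_⟩
    · have := card_PhiT_mem eh σ T hehT
      rw [Fintype.card_option] at hcard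
      omega
    · exact connects_down endsF eh w ends' σ hpend hends T _ _ (PhiT eh σ T)
        (mem_PhiT eh σ T) (fun o => o.getD w) (fun x => rfl) (fun _ => .refl)
        (fun a b hab => hab.elim) hconn
  · intro T' hT'
    rw [Finset.mem_filter] at hT' ⊢
    obtain ⟨-, hcard, hconn⟩ := hT'
    have hnotmem : eh ∉ T'.image (fun g => ((σ g) : F)) := by
      simp only [Finset.mem_image]
      rintro ⟨g, -, hg⟩
      exact (σ g).2 hg
    refine ⟨Finset.mem_univ _, ?_, ?_⟩
    · rw [Finset.card_insert_of_notMem hnotmem,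
        Finset.card_image_of_injective _ (iota_inj eh σ), Fintype.card_option]
      omega
    · refine connects_up endsF eh ends' σ hends _ _ _ T'
        (fun g hg => Finset.mem_insert_of_mem (Finset.mem_image_of_mem _ hg))
        ⟨w, Relation.ReflTransGen.single (Or.inl ⟨eh, Finset.mem_insert_self _ _, ?_⟩)⟩
        (fun a b hab => hab.elim) hconn
      rcases hpend with hp | hp
      · exact Or.inr hp
      · exact Or.inl hp
  · intro T hT
    rw [Finset.mem_filter] at hT
    have hehT := pendant_mem_eh endsF eh ends' σ hends T hT.2.2
    ext f
    rw [Finset.mem_insert, Finset.mem_image]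
    constructor
    · rintro (rfl | ⟨g, hg, rfl⟩)
      · exact hehT
      · exact (mem_PhiT eh σ T g).1 hg
    · intro hf
      by_cases hfe : f = eh
      · exact Or.inl hfe
      · exact Or.inr ⟨σ.symm ⟨f, hfe⟩,
          by rw [mem_PhiT, Equiv.apply_symm_apply]; exact hf,
          by rw [Equiv.apply_symm_apply]⟩
  · intro T' hT'
    ext g
    rw [mem_PhiT, Finset.mem_insert, Finset.mem_image]
    constructor
    · rintro (h | ⟨g', hg', hgg⟩)
      · exact absurd h (σ g).2
      · rwa [← iota_inj eh σ hgg]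
    · intro hg
      exact Or.inr ⟨g, hg, rfl⟩
  · intro T hT
    rw [Finset.mem_filter] at hT
    exact prod_compl_mem L eh ℓ' σ hL T (pendant_mem_eh endsF eh ends' σ hends T hT.2.2)

end Pendant2
section Pendant3
open scoped Classical

variable {V E' F : Type} [Fintype V] [Fintype E'] [Fintype F]
  [DecidableEq V] [DecidableEq E'] [DecidableEq F]
variable (endsF : F → Option V × Option V) (L : F → ℝ) (eh : F) (w : V)
  (ends' : E' → V × V) (ℓ' : E' → ℝ)

lemma pendant_contract [Nonempty V] (σ : E' ≃ {f : F // f ≠ eh})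
    (hpend : endsF eh = (some w, none) ∨ endsF eh = (none, some w))
    (hends : ∀ g, endsF ((σ g) : F) = (some (ends' g).1, some (ends' g).2))
    (hL : ∀ g, L ((σ g) : F) = ℓ' g) (z : V) :
    treePolyContract endsF (some z) none L
      = treePolyContract ends' z w ℓ' + L eh * treePoly ends' ℓ' := by
  classical
  have hstepnone : stepRel endsF Finset.univ
      (fun p q => p = some z ∧ q = none) none (some z) :=
    Or.inr (Or.inr ⟨rfl, rfl⟩)
  unfold treePolyContract treePoly
  rw [← Finset.sum_filter_add_sum_filter_not
    (Finset.univ.filter (fun T : Finset F => T.card + 2 = Fintype.card (Option V) ∧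
        Connects endsF T (fun p q => p = some z ∧ q = none)))
    (fun T => eh ∈ T) (fun T => ∏ f ∈ Tᶜ, L f)]
  congr 1
  -- Branch 1 : trees containing the pendant edge ↔ contraction trees of the base graph
  · refine Finset.sum_nbij' (fun T => PhiT eh σ T)
      (fun T' => insert eh (T'.image (fun g => ((σ g) : F)))) ?_ ?_ ?_ ?_ ?_
    · intro T hT
      rw [Finset.mem_filter, Finset.mem_filter] at hT
      obtain ⟨⟨-, hcard, hconn⟩, hehT⟩ := hT
      rw [Finset.mem_filter]
      refine ⟨Finset.mem_univ _, ?_, ?_⟩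
      · have := card_PhiT_mem eh σ T hehT
        rw [Fintype.card_option] at hcard
        omega
      · refine connects_down endsF eh w ends' σ hpend hends T _
          (fun p q => p = z ∧ q = w) (PhiT eh σ T)
          (mem_PhiT eh σ T) (fun o => o.getD w) (fun x => rfl) (fun _ => .refl)
          ?_ hconn
        rintro p q ⟨rfl, rfl⟩
        exact Relation.ReflTransGen.single (Or.inr (Or.inl ⟨rfl, rfl⟩))
    · intro T' hT'
      rw [Finset.mem_filter] at hT'
      obtain ⟨-, hcard, hconn⟩ := hT'
      have hnotmem : eh ∉ T'.image (fun g => ((σ g) : F)) := by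
        simp only [Finset.mem_image]
        rintro ⟨g, -, hg⟩
        exact (σ g).2 hg
      rw [Finset.mem_filter, Finset.mem_filter]
      refine ⟨⟨Finset.mem_univ _, ?_, ?_⟩, Finset.mem_insert_self _ _⟩
      · rw [Finset.card_insert_of_notMem hnotmem,
          Finset.card_image_of_injective _ (iota_inj eh σ), Fintype.card_option]
        omega
      · have hehstep : Relation.ReflTransGen
            (stepRel endsF (insert eh (T'.image (fun g => ((σ g) : F))))
              (fun p q => p = some z ∧ q = none)) none (some w) := by
          refine Relation.ReflTransGen.single (Or.inl ⟨eh, Finset.mem_insert_self _ _, ?_⟩)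
          rcases hpend with hp | hp
          · exact Or.inr hp
          · exact Or.inl hp
        refine connects_up endsF eh ends' σ hends
          (insert eh (T'.image (fun g => ((σ g) : F))))
          (fun p q => p = some z ∧ q = none) (fun p q => p = z ∧ q = w) T'
          (fun g hg => Finset.mem_insert_of_mem (Finset.mem_image_of_mem _ hg))
          ⟨w, hehstep⟩ ?_ hconn
        intro p q hpq
        rw [hpq.1, hpq.2]
        have step1 : Relation.ReflTransGen
            (stepRel endsF (insert eh (T'.image (fun g => ((σ g) : F))))
              (fun p q => p = some z ∧ q = none)) (some z) none :=
          Relation.ReflTransGen.single (Or.inr (Or.inl ⟨rfl, rfl⟩))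
        exact step1.trans hehstep
    · intro T hT
      rw [Finset.mem_filter] at hT
      have hehT := hT.2
      ext f
      rw [Finset.mem_insert, Finset.mem_image]
      constructor
      · rintro (rfl | ⟨g, hg, rfl⟩)
        · exact hehT
        · exact (mem_PhiT eh σ T g).1 hg
      · intro hf
        by_cases hfe : f = eh
        · exact Or.inl hfe
        · exact Or.inr ⟨σ.symm ⟨f, hfe⟩,
            by rw [mem_PhiT, Equiv.apply_symm_apply]; exact hf,
            by rw [Equiv.apply_symm_apply]⟩
    · intro T' hT'
      ext g
      rw [mem_PhiT, Finset.mem_insert, Finset.mem_image]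
      constructor
      · rintro (h | ⟨g', hg', hgg⟩)
        · exact absurd h (σ g).2
        · rwa [← iota_inj eh σ hgg]
      · intro hg
        exact Or.inr ⟨g, hg, rfl⟩
    · intro T hT
      rw [Finset.mem_filter] at hT
      exact prod_compl_mem L eh ℓ' σ hL T hT.2
  -- Branch 2 : trees avoiding the pendant edge ↔ spanning trees of the base graph
  · rw [Finset.mul_sum]
    refine Finset.sum_nbij' (fun T => PhiT eh σ T)
      (fun T' => T'.image (fun g => ((σ g) : F))) ?_ ?_ ?_ ?_ ?_
    · intro T hT
      rw [Finset.mem_filter, Finset.mem_filter] at hT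
      obtain ⟨⟨-, hcard, hconn⟩, hehT⟩ := hT
      rw [Finset.mem_filter]
      refine ⟨Finset.mem_univ _, ?_, ?_⟩
      · have := card_PhiT_not_mem eh σ T hehT
        rw [Fintype.card_option] at hcard
        omega
      · refine connects_down endsF eh w ends' σ hpend hends T _
          (fun _ _ => False) (PhiT eh σ T)
          (mem_PhiT eh σ T) (fun o => o.getD z) (fun x => rfl)
          (fun h => absurd h hehT) ?_ hconn
        rintro p q ⟨rfl, rfl⟩
        exact .refl
    · intro T' hT'
      rw [Finset.mem_filter] at hT'
      obtain ⟨-, hcard, hconn⟩ := hT'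
      have hnotmem : eh ∉ T'.image (fun g => ((σ g) : F)) := by
        simp only [Finset.mem_image]
        rintro ⟨g, -, hg⟩
        exact (σ g).2 hg
      rw [Finset.mem_filter, Finset.mem_filter]
      refine ⟨⟨Finset.mem_univ _, ?_, ?_⟩, hnotmem⟩
      · rw [Finset.card_image_of_injective _ (iota_inj eh σ), Fintype.card_option]
        omega
      · refine connects_up endsF eh ends' σ hends _ _ _ T'
          (fun g hg => Finset.mem_image_of_mem _ hg)
          ⟨z, Relation.ReflTransGen.single (Or.inr (Or.inr ⟨rfl, rfl⟩))⟩
          (fun a b hab => hab.elim) hconn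
    · intro T hT
      rw [Finset.mem_filter] at hT
      have hehT := hT.2
      ext f
      rw [Finset.mem_image]
      constructor
      · rintro ⟨g, hg, rfl⟩
        exact (mem_PhiT eh σ T g).1 hg
      · intro hf
        have hfe : f ≠ eh := fun h => hehT (h ▸ hf)
        exact ⟨σ.symm ⟨f, hfe⟩,
          by rw [mem_PhiT, Equiv.apply_symm_apply]; exact hf,
          by rw [Equiv.apply_symm_apply]⟩
    · intro T' hT'
      ext g
      rw [mem_PhiT, Finset.mem_image]
      constructor
      · rintro ⟨g', hg', hgg⟩
        rwa [← iota_inj eh σ hgg]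
      · intro hg
        exact ⟨g, hg, rfl⟩
    · intro T hT
      rw [Finset.mem_filter] at hT
      exact prod_compl_not_mem L eh ℓ' σ hL T hT.2

end Pendant3
section Equivs
variable {E : Type} [DecidableEq E]

/-- Edge correspondence for the graph `H ∖ e₁`. -/
noncomputable def sigma1 (e0 : E) :
    {f : E // f ≠ e0} ≃
      {g : {f : E ⊕ Unit // f ≠ Sum.inl e0} // g ≠ ⟨Sum.inr (), Sum.inr_ne_inl⟩} :=
  Equiv.ofBijective
    (fun f => ⟨⟨Sum.inl f.1, fun h => f.2 (Sum.inl.inj h)⟩,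
      fun h => Sum.inl_ne_inr (congrArg Subtype.val h)⟩)
    (by
      constructor
      · intro f f' h
        exact Subtype.ext (Sum.inl.inj (congrArg (fun x => x.1.1) h))
      · rintro ⟨⟨x, hx⟩, hg⟩
        cases x with
        | inl f =>
          refine ⟨⟨f, fun h => hx (by rw [h])⟩, ?_⟩
          exact Subtype.ext (Subtype.ext rfl)
        | inr uu =>
          cases uu
          exact absurd (Subtype.ext rfl) hg)

/-- Edge correspondence for the graph `H ∖ e₂`. -/
noncomputable def sigma2 (e0 : E) :
    {f : E // f ≠ e0} ≃
      {g : {f : E ⊕ Unit // f ≠ Sum.inr ()} // g ≠ ⟨Sum.inl e0, Sum.inl_ne_inr⟩} :=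
  Equiv.ofBijective
    (fun f => ⟨⟨Sum.inl f.1, Sum.inl_ne_inr⟩,
      fun h => f.2 (Sum.inl.inj (congrArg Subtype.val h))⟩)
    (by
      constructor
      · intro f f' h
        exact Subtype.ext (Sum.inl.inj (congrArg (fun x => x.1.1) h))
      · rintro ⟨⟨x, hx⟩, hg⟩
        cases x with
        | inl f =>
          have hf : f ≠ e0 := by
            intro h
            exact hg (by subst h; exact Subtype.ext rfl)
          exact ⟨⟨f, hf⟩, Subtype.ext (Subtype.ext rfl)⟩
        | inr uu =>
          cases uu
          exact absurd rfl hx)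

end Equivs


/-- Lemma `lem:foster-subdiv`: if `H` is obtained from `G` by subdividing
the edge `e0` into `e₁ ∪ e₂` with `ℓ_{e₁} + ℓ_{e₂} = ℓ_{e0}`, then
`F^G(e0) = F^H(e₁) + F^H(e₂)`. -/
theorem foster_subdivision
    {V E : Type} [Fintype V] [Fintype E] [DecidableEq V] [DecidableEq E]
    (ends : E → V × V) (hG : ConnectedG ends)
    (ℓ : E → ℝ) (hpos : ∀ f, 0 < ℓ f) (e0 : E)
    (a b : ℝ) (ha : 0 < a) (hb : 0 < b) (hab : a + b = ℓ e0) :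
    foster ends ℓ e0 =
      foster (subdivEnds ends e0) (subdivLen ℓ e0 a b) (Sum.inl e0)
      + foster (subdivEnds ends e0) (subdivLen ℓ e0 a b) (Sum.inr ()) := by
  classical
  haveI : Nonempty V := ⟨(ends e0).1⟩
  set u := (ends e0).1 with hu
  set v := (ends e0).2 with hv
  -- the base deleted graph G ∖ e0
  set ends0 : {f : E // f ≠ e0} → V × V := fun f => ends f.1 with hends0
  set ℓ0 : {f : E // f ≠ e0} → ℝ := fun f => ℓ f.1 with hℓ0
  -- graph H ∖ e₁
  set endsF1 : {f : E ⊕ Unit // f ≠ Sum.inl e0} → Option V × Option V :=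
    fun f => subdivEnds ends e0 f.1 with hendsF1
  set L1 : {f : E ⊕ Unit // f ≠ Sum.inl e0} → ℝ :=
    fun f => subdivLen ℓ e0 a b f.1 with hL1
  -- graph H ∖ e₂
  set endsF2 : {f : E ⊕ Unit // f ≠ Sum.inr ()} → Option V × Option V :=
    fun f => subdivEnds ends e0 f.1 with hendsF2
  set L2 : {f : E ⊕ Unit // f ≠ Sum.inr ()} → ℝ :=
    fun f => subdivLen ℓ e0 a b f.1 with hL2
  have hse1 : subdivEnds ends e0 (Sum.inl e0) = (some u, none) := by
    simp [subdivEnds, hu]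
  have hse2 : subdivEnds ends e0 (Sum.inr ()) = (none, some v) := by
    simp [subdivEnds, hv]
  have hsl1 : subdivLen ℓ e0 a b (Sum.inl e0) = a := by
    simp [subdivLen]
  have hsl2 : subdivLen ℓ e0 a b (Sum.inr ()) = b := by
    simp [subdivLen]
  -- hypotheses for the pendant lemmas, side 1
  have eh1ne : (Sum.inr () : E ⊕ Unit) ≠ Sum.inl e0 := Sum.inr_ne_inl
  have hpend1 : endsF1 ⟨Sum.inr (), Sum.inr_ne_inl⟩ = (some v, none) ∨
      endsF1 ⟨Sum.inr (), Sum.inr_ne_inl⟩ = (none, some v) := Or.inr hse2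
  have hends1 : ∀ g : {f : E // f ≠ e0},
      endsF1 ((sigma1 e0 g : {f : E ⊕ Unit // f ≠ Sum.inl e0}) : _)
        = (some (ends0 g).1, some (ends0 g).2) := by
    intro g
    show subdivEnds ends e0 (Sum.inl g.1) = _
    simp [subdivEnds, g.2, ends0]
  have hLg1 : ∀ g : {f : E // f ≠ e0},
      L1 ((sigma1 e0 g : {f : E ⊕ Unit // f ≠ Sum.inl e0}) : _) = ℓ0 g := by
    intro g
    show subdivLen ℓ e0 a b (Sum.inl g.1) = _
    simp [subdivLen, g.2, ℓ0]
  have hLeh1 : L1 ⟨Sum.inr (), Sum.inr_ne_inl⟩ = b := hsl2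
  -- hypotheses for the pendant lemmas, side 2
  have hpend2 : endsF2 ⟨Sum.inl e0, Sum.inl_ne_inr⟩ = (some u, none) ∨
      endsF2 ⟨Sum.inl e0, Sum.inl_ne_inr⟩ = (none, some u) := Or.inl hse1
  have hends2 : ∀ g : {f : E // f ≠ e0},
      endsF2 ((sigma2 e0 g : {f : E ⊕ Unit // f ≠ Sum.inr ()}) : _)
        = (some (ends0 g).1, some (ends0 g).2) := by
    intro g
    show subdivEnds ends e0 (Sum.inl g.1) = _
    simp [subdivEnds, g.2, ends0]
  have hLg2 : ∀ g : {f : E // f ≠ e0},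
      L2 ((sigma2 e0 g : {f : E ⊕ Unit // f ≠ Sum.inr ()}) : _) = ℓ0 g := by
    intro g
    show subdivLen ℓ e0 a b (Sum.inl g.1) = _
    simp [subdivLen, g.2, ℓ0]
  have hLeh2 : L2 ⟨Sum.inl e0, Sum.inl_ne_inr⟩ = a := hsl1
  -- pendant conclusions
  have hconn1 : ConnectedG endsF1 ↔ ConnectedG ends0 :=
    pendant_connected endsF1 ⟨Sum.inr (), Sum.inr_ne_inl⟩ v ends0 (sigma1 e0)
      hpend1 hends1
  have hconn2 : ConnectedG endsF2 ↔ ConnectedG ends0 :=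
    pendant_connected endsF2 ⟨Sum.inl e0, Sum.inl_ne_inr⟩ u ends0 (sigma2 e0)
      hpend2 hends2
  have hP1 : treePoly endsF1 L1 = treePoly ends0 ℓ0 :=
    pendant_treePoly endsF1 L1 ⟨Sum.inr (), Sum.inr_ne_inl⟩ v ends0 ℓ0 (sigma1 e0)
      hpend1 hends1 hLg1
  have hP2 : treePoly endsF2 L2 = treePoly ends0 ℓ0 :=
    pendant_treePoly endsF2 L2 ⟨Sum.inl e0, Sum.inl_ne_inr⟩ u ends0 ℓ0 (sigma2 e0)
      hpend2 hends2 hLg2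
  have hC1 : treePolyContract endsF1 (some u) none L1
      = treePolyContract ends0 u v ℓ0 + b * treePoly ends0 ℓ0 := by
    have := pendant_contract endsF1 L1 ⟨Sum.inr (), Sum.inr_ne_inl⟩ v ends0 ℓ0 (sigma1 e0)
      hpend1 hends1 hLg1 u
    rwa [hLeh1] at this
  have hC2 : treePolyContract endsF2 (some v) none L2
      = treePolyContract ends0 u v ℓ0 + a * treePoly ends0 ℓ0 := by
    have := pendant_contract endsF2 L2 ⟨Sum.inl e0, Sum.inl_ne_inr⟩ u ends0 ℓ0 (sigma2 e0)
      hpend2 hends2 hLg2 v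
    rwa [hLeh2, treePolyContract_comm ends0 v u] at this
  -- unfold the three Foster coefficients
  unfold foster
  by_cases hc : ConnectedG ends0
  · rw [if_pos hc, if_pos (hconn1.2 hc), if_pos (hconn2.2 hc)]
    set P := treePoly ends0 ℓ0 with hP
    set C := treePolyContract ends0 u v ℓ0 with hC
    have hpos0 : ∀ f : {f : E // f ≠ e0}, 0 < ℓ0 f := fun f => hpos f.1
    have hPpos : 0 < P := treePoly_pos hc hpos0
    have hCnn : 0 ≤ C := treePolyContract_nonneg ends0 u v hpos0
    have hD : 0 < (a + b) * P + C := by positivity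
    -- rewrite the three effective resistances
    have heff0 : effRes ends0 u v ℓ0 = C / P := rfl
    have heff1 : effRes endsF1 (subdivEnds ends e0 (Sum.inl e0)).1
        (subdivEnds ends e0 (Sum.inl e0)).2 L1 = (C + b * P) / P := by
      rw [hse1]
      unfold effRes
      rw [hP1, hC1]
    have heff2 : effRes endsF2 (subdivEnds ends e0 (Sum.inr ())).1
        (subdivEnds ends e0 (Sum.inr ())).2 L2 = (C + a * P) / P := by
      rw [hse2]
      unfold effRes
      rw [hP2, treePolyContract_comm endsF2 none (some v), hC2]
    rw [heff1, heff2, hsl1, hsl2]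
    show ℓ e0 / (ℓ e0 + effRes ends0 u v ℓ0) = _
    rw [heff0, ← hab]
    have hPne : P ≠ 0 := ne_of_gt hPpos
    have hDne : (a + b) * P + C ≠ 0 := ne_of_gt hD
    have e1 : a + b + C / P = ((a + b) * P + C) / P := by field_simp
    have e2 : a + (C + b * P) / P = ((a + b) * P + C) / P := by field_simp; ring
    have e3 : b + (C + a * P) / P = ((a + b) * P + C) / P := by field_simp; ring
    rw [e1, e2, e3, div_div_eq_mul_div, div_div_eq_mul_div, div_div_eq_mul_div,
      ← add_div]
    ring_nf
  · rw [if_neg hc, if_neg (fun h => hc (hconn1.1 h)), if_neg (fun h => hc (hconn2.1 h))]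
    norm_num
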